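/- arXiv:1509.02995 — 5 statements merged into one kernel-verified Lean document; each statement's English description precedes it below -/
import Mathlib

section
/- (Feasible range of the shift, case α < β: sufficiency) Let W be a positive integer and let x_min ≤ x_max be integers with x_max − x_min < W. Set α = x_min mod W and β = x_max mod W, and suppose α < β. Then for every integer shift c with −α ≤ c < W − β and every integer x with x_min ≤ x ≤ x_max, one has ⌊(x + c)/W⌋ = ⌊(x_min + c)/W⌋; in particular all integers in [x_min, x_max] are merged to a common value by f_{c,W}. -/
/-- The piecewise constant merge function with shift `c` and step size `W`:
`f_{c,W}(x) = ⌊(x + c)/W⌋·W + W/2 − c`. -/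
noncomputable def mergeFn (c W x : ℝ) : ℝ :=
  (⌊(x + c) / W⌋ : ℝ) * W + W / 2 - c

lemma floor_int_div_real (a W : ℤ) (hW : 0 < W) : ⌊(a : ℝ) / (W : ℝ)⌋ = a / W := by
  have h : (W : ℝ) = ((W.toNat : ℕ) : ℝ) := by
    exact_mod_cast (Int.toNat_of_nonneg hW.le).symm
  rw [h, ← Rat.cast_intCast (α := ℝ) a, ← Rat.cast_natCast (α := ℝ) W.toNat,
    ← Rat.cast_div, Rat.floor_cast, Rat.floor_intCast_div_natCast,
    Int.toNat_of_nonneg hW.le]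

/-- **Feasible range of the shift, case α < β: sufficiency.** If
`xmax − xmin < W`, `α = xmin % W < β = xmax % W`, then every integer shift
`c` with `−α ≤ c < W − β` merges every integer `x ∈ [xmin, xmax]` to the same
interval as `xmin`, and hence `f_{c,W}` maps all such `x` to a common value. -/
theorem feasible_shift_lt_sufficiency (W : ℤ) (hW : 0 < W)
    (xmin xmax : ℤ) (hle : xmin ≤ xmax) (hdiff : xmax - xmin < W)
    (α β : ℤ) (hα : α = xmin % W) (hβ : β = xmax % W) (hαβ : α < β)
    (c : ℤ) (hc1 : -α ≤ c) (hc2 : c < W - β)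
    (x : ℤ) (hx1 : xmin ≤ x) (hx2 : x ≤ xmax) :
    (x + c) / W = (xmin + c) / W ∧
      mergeFn (c : ℝ) (W : ℝ) (x : ℝ) = mergeFn (c : ℝ) (W : ℝ) (xmin : ℝ) := by
  -- basic facts
  have hα0 : 0 ≤ α := hα ▸ Int.emod_nonneg _ hW.ne'
  have hβW : β < W := hβ ▸ Int.emod_lt_of_pos _ hW
  have hmin : W * (xmin / W) + α = xmin := by rw [hα]; exact Int.mul_ediv_add_emod _ _
  -- xmax - xmin = β - α
  have hmod : (xmax - xmin) % W = (β - α) % W := by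
    rw [hα, hβ, Int.sub_emod]
  have h1 : (xmax - xmin) % W = xmax - xmin := Int.emod_eq_of_lt (by omega) hdiff
  have h2 : (β - α) % W = β - α := Int.emod_eq_of_lt (by omega) (by omega)
  have hd : xmax - xmin = β - α := by omega
  set q := xmin / W with hq
  -- key: for any 0 ≤ r < W, (W*q + r)/W = q
  have key : ∀ r : ℤ, 0 ≤ r → r < W → (W * q + r) / W = q := by
    intro r h0 h1
    rw [add_comm, Int.add_mul_ediv_left _ _ hW.ne', Int.ediv_eq_zero_of_lt h0 h1,
      zero_add]
  have hx : x + c = W * q + (α + (x - xmin) + c) := by omega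
  have hxmin : xmin + c = W * q + (α + c) := by omega
  have e1 : (x + c) / W = q := by
    rw [hx]; exact key _ (by omega) (by omega)
  have e2 : (xmin + c) / W = q := by
    rw [hxmin]; exact key _ (by omega) (by omega)
  refine ⟨e1.trans e2.symm, ?_⟩
  unfold mergeFn
  have f1 : ((x : ℝ) + (c : ℝ)) / (W : ℝ) = ((x + c : ℤ) : ℝ) / (W : ℝ) := by push_cast; ring
  have f2 : ((xmin : ℝ) + (c : ℝ)) / (W : ℝ) = ((xmin + c : ℤ) : ℝ) / (W : ℝ) := by
    push_cast; ring
  rw [f1, f2, floor_int_div_real _ _ hW, floor_int_div_real _ _ hW, e1, e2]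
end

section
/- (Feasible range of the shift, case α > β: sufficiency) Let W be a positive integer and let x_min ≤ x_max be integers with x_max − x_min < W. Set α = x_min mod W and β = x_max mod W, and suppose α > β. Then for every integer shift c with W − α ≤ c < W − β and every integer x with x_min ≤ x ≤ x_max, one has ⌊(x + c)/W⌋ = ⌊(x_min + c)/W⌋; in particular all integers in [x_min, x_max] are merged to a common value by f_{c,W}. -/
namespace Int

lemma ediv_eq_of_mul_le_of_lt_mul {a b q : ℤ} (hb : 0 < b) (h₁ : b * q ≤ a)
    (h₂ : a < b * (q + 1)) : a / b = q :=
  ((Int.ediv_emod_unique (r := a - b * q) hb).2 ⟨by ring, by linarith, by linarith⟩).1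

lemma ediv_eq_ediv_add_one_of_emod_lt_emod {a b m : ℤ} (hm : 0 < m) (hab : a ≤ b)
    (hba : b - a < m) (hmod : b % m < a % m) : b / m = a / m + 1 := by
  have hgap : m * (b / m - a / m) = (b - a) + (a % m - b % m) := by
    linarith [Int.mul_ediv_add_emod a m, Int.mul_ediv_add_emod b m]
  have hpos : 0 < b / m - a / m := pos_of_mul_pos_right (by linarith) hm.le
  have hlt : b / m - a / m < 2 :=
    lt_of_mul_lt_mul_left (a := m) (by linarith [emod_lt_of_pos a hm, emod_nonneg b hm.ne'])
      hm.le
  omega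

end Int

lemma mergeFn_intCast {W : ℤ} (hW : 0 ≤ W) (c x : ℤ) :
    mergeFn c W x = ((x + c) / W : ℤ) * W + W / 2 - c := by
  rw [mergeFn, ← Int.cast_add, Int.floor_div_cast_of_nonneg hW, Int.floor_intCast]

/-- **Feasible range of the shift, case α > β: sufficiency.** If
`xmax − xmin < W`, `α = xmin % W > β = xmax % W`, then every integer shift
`c` with `W − α ≤ c < W − β` merges every integer `x ∈ [xmin, xmax]` to the
same interval as `xmin`, and hence `f_{c,W}` maps all such `x` to a common
value. -/
theorem feasible_shift_gt_sufficiency (W : ℤ) (hW : 0 < W)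
    (xmin xmax : ℤ) (hle : xmin ≤ xmax) (hdiff : xmax - xmin < W)
    (α β : ℤ) (hα : α = xmin % W) (hβ : β = xmax % W) (hαβ : α > β)
    (c : ℤ) (hc1 : W - α ≤ c) (hc2 : c < W - β)
    (x : ℤ) (hx1 : xmin ≤ x) (hx2 : x ≤ xmax) :
    (x + c) / W = (xmin + c) / W ∧
      mergeFn (c : ℝ) (W : ℝ) (x : ℝ) = mergeFn (c : ℝ) (W : ℝ) (xmin : ℝ) := by
  subst hα hβ
  have hnext : xmax / W = xmin / W + 1 :=
    Int.ediv_eq_ediv_add_one_of_emod_lt_emod hW hle hdiff hαβ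
  have hblock (y : ℤ) (hy₁ : xmin ≤ y) (hy₂ : y ≤ xmax) : (y + c) / W = xmin / W + 1 :=
    Int.ediv_eq_of_mul_le_of_lt_mul hW (by linarith [Int.mul_ediv_add_emod xmin W])
      (by linarith [Int.mul_ediv_add_emod xmax W, congrArg (W * ·) hnext])
  have hdiv : (x + c) / W = (xmin + c) / W := (hblock x hx1 hx2).trans (hblock xmin le_rfl hle).symm
  exact ⟨hdiv, by rw [mergeFn_intCast hW.le, mergeFn_intCast hW.le, hdiv]⟩
end

section
/- (Feasible range of the shift, case α > β: maximality) Let W be a positive integer and let x_min ≤ x_max be integers with x_max − x_min < W. Set α = x_min mod W and β = x_max mod W, and suppose α > β. Then for every integer shift c with −β ≤ c < W − α, one has ⌊(x_min + c)/W⌋ ≠ ⌊(x_max + c)/W⌋; i.e., no shift in this range achieves identical merging of x_min and x_max. -/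
/-- **Feasible range of the shift, case α > β: maximality.** If
`xmax − xmin < W`, `α = xmin % W > β = xmax % W`, then no integer shift `c`
with `−β ≤ c < W − α` achieves identical merging of `xmin` and `xmax`:
the floors `⌊(xmin + c)/W⌋` and `⌊(xmax + c)/W⌋` differ. -/
theorem feasible_shift_gt_maximality (W : ℤ) (hW : 0 < W)
    (xmin xmax : ℤ) (hle : xmin ≤ xmax) (hdiff : xmax - xmin < W)
    (α β : ℤ) (hα : α = xmin % W) (hβ : β = xmax % W) (hαβ : α > β)
    (c : ℤ) (hc1 : -β ≤ c) (hc2 : c < W - α) :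
    (xmin + c) / W ≠ (xmax + c) / W := by
  have hW0 : W ≠ 0 := ne_of_gt hW
  have e1 : W * (xmin / W) + α = xmin := by rw [hα]; exact Int.mul_ediv_add_emod xmin W
  have e2 : W * (xmax / W) + β = xmax := by rw [hβ]; exact Int.mul_ediv_add_emod xmax W
  have hα0 : 0 ≤ α := hα ▸ Int.emod_nonneg _ hW0
  have hβ0 : 0 ≤ β := hβ ▸ Int.emod_nonneg _ hW0
  set q1 := xmin / W with hq1
  set q2 := xmax / W with hq2
  have hd1 : 0 < W * (q2 - q1) := by nlinarith
  have hd2 : W * (q2 - q1) < 2 * W := by nlinarith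
  have hdpos : 0 < q2 - q1 := by
    by_contra h
    push_neg at h
    nlinarith
  have hdlt : q2 - q1 < 2 := by
    by_contra h
    push_neg at h
    nlinarith
  have hq : q2 = q1 + 1 := by omega
  have f1 : (xmin + c) / W = q1 := by
    have : xmin + c = (α + c) + W * q1 := by linarith
    rw [this, Int.add_mul_ediv_left _ _ hW0,
      Int.ediv_eq_zero_of_lt (by linarith) (by linarith), zero_add]
  have f2 : (xmax + c) / W = q2 := by
    have : xmax + c = (β + c) + W * q2 := by linarith
    rw [this, Int.add_mul_ediv_left _ _ hW0,
      Int.ediv_eq_zero_of_lt (by linarith) (by linarith), zero_add]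
  rw [f1, f2]
  omega
end

section
/- (Lemma 1, fixed target merging) Let X^0, X^1, …, X^N be integers (X^0 the target value and X^1, …, X^N the side-information values), let Z = max_{1≤n≤N} |X^0 − X^n| be the maximum target difference, set step size W = 2Z + 2 and shift c = W/2 − (X^0 mod W). Then f_{c,W}(X^n) = X^0 for every n ∈ {0, 1, …, N}; note W is even, so c is an integer. -/
lemma floor_intCast_div_intCast (a b : ℤ) (hb : 0 < b) :
    ⌊((a : ℝ) / (b : ℝ))⌋ = a / b := by
  have hb' : (0:ℝ) < (b:ℝ) := by exact_mod_cast hb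
  rw [Int.floor_eq_iff]
  constructor
  · rw [le_div_iff₀ hb']
    exact_mod_cast Int.ediv_mul_le a (ne_of_gt hb)
  · rw [div_lt_iff₀ hb']
    exact_mod_cast Int.lt_ediv_add_one_mul_self a hb

/-- **Lemma 1 (fixed target merging).** Let `X 0` be the target value and
`X 1, …, X N` (indexed as `X n.succ` for `n : Fin N`) the side-information
values, with maximum target difference `Z = max_{1≤n≤N} |X 0 − X n|`. With
step size `W = 2Z + 2` and shift `c = W/2 − (X 0 % W)`, the merge function
satisfies `f_{c,W}(X n) = X 0` for every `n ∈ {0, 1, …, N}`. (Here `W` is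
even, so `c` is an integer.) -/
theorem merge_lemma_fixed_target (N : ℕ) (hN : 0 < N)
    (X : Fin (N + 1) → ℤ) (Z : ℤ)
    (hZ : IsGreatest (Set.range fun n : Fin N => |X 0 - X n.succ|) Z)
    (W c : ℤ) (hW : W = 2 * Z + 2) (hc : c = W / 2 - X 0 % W) :
    ∀ n : Fin (N + 1), mergeFn (c : ℝ) (W : ℝ) ((X n : ℤ) : ℝ) = (X 0 : ℝ) := by
  intro n
  obtain ⟨m, hm⟩ := hZ.1
  have hZ0 : 0 ≤ Z := hm ▸ abs_nonneg _
  have habs : |X 0 - X n| ≤ Z := by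
    induction n using Fin.cases with
    | zero => simpa using hZ0
    | succ i => exact hZ.2 ⟨i, rfl⟩
  have hWpos : (0:ℤ) < W := by omega
  have hcW : W / 2 = Z + 1 := by omega
  -- the residue of X n + c mod W
  have hr : (X n + c) % W = X n - X 0 + Z + 1 := by
    have h1 : X n + c = (X n - X 0 + Z + 1) + W * (X 0 / W) := by
      have := Int.emod_add_mul_ediv (X 0) W
      omega
    rw [h1, Int.add_mul_emod_self_left]
    rw [abs_le] at habs
    exact Int.emod_eq_of_lt (by omega) (by omega)
  have hfloor : ⌊(((X n : ℤ) : ℝ) + (c : ℝ)) / (W : ℝ)⌋ = (X n + c) / W := by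
    rw [← Int.cast_add, floor_intCast_div_intCast _ _ hWpos]
  have key : (X n + c) / W * W = X n + c - (X n + c) % W := by
    have := Int.emod_add_mul_ediv (X n + c) W
    linarith [this]
  have hfin : ((X n + c) / W * W + W / 2 - c : ℤ) = X 0 := by
    rw [key, hr, hcW]; ring
  unfold mergeFn
  rw [hfloor]
  set d : ℤ := W / 2 with hd
  have hW2 : W = 2 * d := by omega
  have hWeven : (W : ℝ) / 2 = (d : ℝ) := by
    rw [hW2]; push_cast; ring
  rw [hWeven]
  push_cast [← hfin]
  ring
end

section
/- (Fixed target merging with any sufficiently large step size) Let X^0, X^1, …, X^N be integers, let Z = max_{1≤n≤N} |X^0 − X^n| be the maximum target difference, and let W be any even positive integer with W ≥ 2Z + 2. Then with shift c = W/2 − (X^0 mod W), the merge function satisfies f_{c,W}(X^n) = X^0 for every n ∈ {0, 1, …, N}. -/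
/-- **Fixed target merging with any sufficiently large step size.** Let `X 0`
be the target value and `X 1, …, X N` (indexed as `X n.succ` for `n : Fin N`)
the side-information values, with maximum target difference
`Z = max_{1≤n≤N} |X 0 − X n|`. For any even positive integer `W ≥ 2Z + 2` and
shift `c = W/2 − (X 0 % W)`, the merge function satisfies
`f_{c,W}(X n) = X 0` for every `n ∈ {0, 1, …, N}`. -/
theorem merge_fixed_target_large_step (N : ℕ) (hN : 0 < N)
    (X : Fin (N + 1) → ℤ) (Z : ℤ)
    (hZ : IsGreatest (Set.range fun n : Fin N => |X 0 - X n.succ|) Z)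
    (W c : ℤ) (hWpos : 0 < W) (hWeven : 2 ∣ W) (hW : 2 * Z + 2 ≤ W)
    (hc : c = W / 2 - X 0 % W) :
    ∀ n : Fin (N + 1), mergeFn (c : ℝ) (W : ℝ) ((X n : ℤ) : ℝ) = (X 0 : ℝ) := by
  obtain ⟨k, hk⟩ := hWeven
  have hZ0 : 0 ≤ Z := by
    have h1 : (1 : ℕ) ≤ N := hN
    have := hZ.2 ⟨⟨0, hN⟩, rfl⟩
    exact le_trans (abs_nonneg _) this
  intro n
  have hd : |X n - X 0| ≤ Z := by
    rcases Fin.eq_zero_or_eq_succ n with rfl | ⟨i, rfl⟩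
    · simpa using hZ0
    · have := hZ.2 ⟨i, rfl⟩
      rw [abs_sub_comm]
      exact this
  have hd' : -Z ≤ X n - X 0 ∧ X n - X 0 ≤ Z := abs_le.mp hd
  set q : ℤ := X 0 / W with hqdef
  have hq : X 0 = W * q + X 0 % W := (Int.mul_ediv_add_emod (X 0) W).symm
  have hW2 : W / 2 = k := by omega
  have hmod : 0 ≤ X 0 % W ∧ X 0 % W < W :=
    ⟨Int.emod_nonneg _ (by omega), Int.emod_lt_of_pos _ hWpos⟩
  set m : ℤ := W * q with hmdef
  have hlow : m ≤ X n + c := by omega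
  have hhigh : X n + c < m + W := by omega
  have hfloor : ⌊(((X n : ℤ) : ℝ) + (c : ℝ)) / (W : ℝ)⌋ = q := by
    rw [Int.floor_eq_iff]
    have hWR : (0 : ℝ) < (W : ℝ) := by exact_mod_cast hWpos
    constructor
    · rw [le_div_iff₀ hWR]
      have : (m : ℝ) ≤ ((X n : ℤ) : ℝ) + (c : ℝ) := by exact_mod_cast hlow
      calc (q : ℝ) * W = (m : ℝ) := by push_cast [hmdef]; ring
        _ ≤ _ := this
    · rw [div_lt_iff₀ hWR]
      have : ((X n : ℤ) : ℝ) + (c : ℝ) < (m : ℝ) + W := by exact_mod_cast hhigh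
      calc ((X n : ℤ) : ℝ) + (c : ℝ) < (m : ℝ) + W := this
        _ = ((q : ℝ) + 1) * W := by push_cast [hmdef]; ring
  unfold mergeFn
  rw [hfloor]
  have : q * W + k - c = X 0 := by rw [mul_comm, ← hmdef]; omega
  have hR : (q : ℝ) * W + k - c = (X 0 : ℝ) := by exact_mod_cast this
  rw [← hR]
  have hWk : (W : ℝ) / 2 = (k : ℝ) := by
    have : (W : ℝ) = 2 * k := by exact_mod_cast hk
    rw [this]; ring
  rw [hWk]
end
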